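/- arXiv:0809.2408 — 3 statements merged into one kernel-verified Lean document; each statement's English description precedes it below -/
import Mathlib

section
/- Let G be a group containing an infinite normal cyclic subgroup C of finite index. Then the union K of all finite normal subgroups of G is a finite normal subgroup of G (in particular, G has a unique maximal finite normal subgroup). -/
/-!
Every element of a finite normal subgroup has finite order, while the infinite cyclic group `C`
has no nontrivial elements of finite order; so the union `K` of the finite normal subgroups meets
`C` trivially and therefore embeds into the finite coset space `G ⧸ C`. That `K` is a subgroup at
all comes from the product of two finite normal subgroups being again a finite normal subgroup.
-/

lemma isOfFinOrder_zpow_iff {G : Type*} [Group G] {x : G} {k : ℤ} :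
    IsOfFinOrder (x ^ k) ↔ IsOfFinOrder x ∨ k = 0 := by
  obtain ⟨n, rfl | rfl⟩ := Int.eq_nat_or_neg k <;> simp [zpow_neg]

namespace Subgroup

variable {G : Type*} [Group G]

lemma finite_coe_sup_of_normal {N₁ N₂ : Subgroup G} [N₂.Normal] (h₁ : (N₁ : Set G).Finite)
    (h₂ : (N₂ : Set G).Finite) : ((N₁ ⊔ N₂ : Subgroup G) : Set G).Finite := by
  rw [mul_normal]
  exact h₁.mul h₂

variable (G) in
def finiteNormalUnion : Subgroup G where
  carrier := {g | ∃ N : Subgroup G, N.Normal ∧ (N : Set G).Finite ∧ g ∈ N}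
  one_mem' := ⟨⊥, inferInstance, by simp, one_mem _⟩
  mul_mem' := by
    rintro a b ⟨N₁, hN₁, hfin₁, ha⟩ ⟨N₂, hN₂, hfin₂, hb⟩
    exact ⟨N₁ ⊔ N₂, sup_normal N₁ N₂, finite_coe_sup_of_normal hfin₁ hfin₂,
      mul_mem (mem_sup_left ha) (mem_sup_right hb)⟩
  inv_mem' := fun ⟨N, hN, hfin, hg⟩ => ⟨N, hN, hfin, inv_mem hg⟩

instance finiteNormalUnion_normal : (finiteNormalUnion G).Normal :=
  ⟨fun _ ⟨N, hN, hfin, hg⟩ x => ⟨N, hN, hfin, hN.conj_mem _ hg x⟩⟩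

lemma isOfFinOrder_of_mem_finiteNormalUnion {g : G} (hg : g ∈ finiteNormalUnion G) :
    IsOfFinOrder g := by
  obtain ⟨N, -, hfin, hgN⟩ := hg
  have : Finite N := hfin.to_subtype
  exact Submonoid.isOfFinOrder_coe.2 (isOfFinOrder_of_finite (⟨g, hgN⟩ : N))

lemma finite_of_disjoint_of_finiteIndex {H K : Subgroup G} [H.FiniteIndex] (h : Disjoint K H) :
    Finite K := by
  have hcard : H.relIndex K = Nat.card K := by
    rw [← inf_relIndex_right, h.symm.eq_bot, relIndex_bot_left]
  exact Nat.finite_of_card_ne_zero (hcard ▸ (isFiniteRelIndex_of_finiteIndex).relIndex_ne_zero)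

lemma finite_finiteNormalUnion {H : Subgroup G} [H.FiniteIndex]
    (hH : ∀ h ∈ H, IsOfFinOrder h → h = 1) : Finite (finiteNormalUnion G) :=
  finite_of_disjoint_of_finiteIndex <| disjoint_def.2 fun hK hH' =>
    hH _ hH' (isOfFinOrder_of_mem_finiteNormalUnion hK)

end Subgroup

theorem union_of_finite_normal_subgroups_finite_general (G : Type*) [Group G]
    (C : Subgroup G) (hcyc : ∃ c : G, C = Subgroup.zpowers c)
    (hinf : Infinite C) (hindex : C.FiniteIndex) :
    ∃ K : Subgroup G,
      (K : Set G) = {g : G | ∃ N : Subgroup G, N.Normal ∧ (N : Set G).Finite ∧ g ∈ N} ∧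
        K.Normal ∧ (K : Set G).Finite := by
  obtain ⟨c, rfl⟩ := hcyc
  have hc : ¬IsOfFinOrder c := by
    rwa [← infinite_zpowers, ← Set.infinite_coe_iff]
  have htorsionFree : ∀ g ∈ Subgroup.zpowers c, IsOfFinOrder g → g = 1 := by
    rintro _ ⟨k, rfl⟩ hk
    simp [(isOfFinOrder_zpow_iff.1 hk).resolve_left hc]
  exact ⟨Subgroup.finiteNormalUnion G, rfl, inferInstance,
    Set.finite_coe_iff.1 (Subgroup.finite_finiteNormalUnion htorsionFree)⟩

theorem union_of_finite_normal_subgroups_finite (G : Type*) [Group G]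
    (C : Subgroup G) (hC : C.Normal) (hcyc : ∃ c : G, C = Subgroup.zpowers c)
    (hinf : Infinite C) (hindex : C.FiniteIndex) :
    ∃ K : Subgroup G,
      (K : Set G) = {g : G | ∃ N : Subgroup G, N.Normal ∧ (N : Set G).Finite ∧ g ∈ N} ∧
        K.Normal ∧ (K : Set G).Finite :=
  union_of_finite_normal_subgroups_finite_general G C hcyc hinf hindex
end

section
/- Let G be a group and suppose φ ∈ Aut(G) has the form φ(g) = w g ε(g) w⁻¹ for some fixed w ∈ G and some function ε : G → E, where E is a finite normal subgroup of G. Then φ is a commensurating automorphism of G. -/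
/-!
Write `φ g = w x w⁻¹` with `x = g ε(g)`, so `x` and `g` agree modulo the finite normal subgroup `E`.
Then every `(x ^ k)⁻¹ g ^ k` lies in `E`, and by pigeonhole two of them coincide, say for `k ≠ l`;
this gives `x ^ n = g ^ n` with `n = l - k ≠ 0`, whence `φ g ^ n = w g ^ n w⁻¹`.
-/

theorem zpow_sub_eq_zpow_sub_of_inv_mul_eq {G : Type*} [Group G] {x g : G} {k l : ℤ}
    (h : (x ^ k)⁻¹ * g ^ k = (x ^ l)⁻¹ * g ^ l) : x ^ (l - k) = g ^ (l - k) := by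
  have hl : g ^ l = x ^ l * (x ^ k)⁻¹ * g ^ k := by
    rw [mul_assoc, h]; group
  rw [zpow_sub, zpow_sub, hl]
  group

theorem exists_zpow_eq_zpow_of_mk_eq {G : Type*} [Group G] {N : Subgroup G} [N.Normal]
    (hN : (N : Set G).Finite) {x g : G} (hxg : (x : G ⧸ N) = g) :
    ∃ n : ℤ, n ≠ 0 ∧ x ^ n = g ^ n := by
  have hmem (k : ℤ) : (x ^ k)⁻¹ * g ^ k ∈ N := by
    rw [← QuotientGroup.eq, QuotientGroup.mk_zpow, QuotientGroup.mk_zpow, hxg]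
  have : Finite N := hN.to_subtype
  obtain ⟨k, l, hkl, heq⟩ := Finite.exists_ne_map_eq_of_infinite
    fun k : ℤ => (⟨(x ^ k)⁻¹ * g ^ k, hmem k⟩ : N)
  exact ⟨l - k, sub_ne_zero.mpr hkl.symm,
    zpow_sub_eq_zpow_sub_of_inv_mul_eq (congrArg Subtype.val heq)⟩

theorem commensurating_of_conjugation_by_finite_normal_twist (G : Type*) [Group G]
    (E : Subgroup G) (hE : E.Normal) (hfin : (E : Set G).Finite)
    (φ : MulAut G) (w : G) (ε : G → G) (hε : ∀ g : G, ε g ∈ E)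
    (hφ : ∀ g : G, φ g = w * (g * ε g) * w⁻¹) :
    ∀ g : G, ∃ (h : G) (m n : ℤ), m ≠ 0 ∧ n ≠ 0 ∧ (φ g) ^ n = h * g ^ m * h⁻¹ := by
  intro g
  obtain ⟨n, hn, hpow⟩ :=
    exists_zpow_eq_zpow_of_mk_eq hfin (QuotientGroup.mk_mul_of_mem g (hε g))
  exact ⟨w, n, n, hn, hn, by rw [hφ g, conj_zpow, hpow]⟩
end

section
/- Let H be a finitely generated group with trivial center. Then H embeds into Out(H * ℤ): the action of H on itself by conjugation together with the trivial action on ℤ induces an injective homomorphism H → Out(H * ℤ). -/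
/-!
If conjugation by `g ∈ H ∗ ℤ` is conjugation by `h` on `H` and the identity on `ℤ`, then `g`
commutes with the generator `t` of `ℤ`. Map `H ∗ ℤ` onto the lamplighter group `H ≀ ℤ`: the image
of `g` commutes with the shift, so its finitely supported base part is shift-invariant, hence
trivial, and the image is a power `tⁿ`. Conjugating the lamp `a` at position `0` by `tⁿ` moves it to
position `n`, and this must be the lamp `h a h⁻¹` at position `0`; either way `h a h⁻¹ = a`
(when `n ≠ 0` both lamps are off). So `h` is central, hence trivial.
-/

open Monoid

namespace Finsupp

theorem eq_zero_of_forall_apply_add_one_eq {M : Type*} [Zero M] (f : ℤ →₀ M)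
    (hf : ∀ n, f (n + 1) = f n) : f = 0 := by
  have hconst : ∀ n, f n = f 0 := fun n => by
    induction n using Int.induction_on with
    | zero => rfl
    | succ n ih => rwa [hf]
    | pred n ih => rwa [← hf, sub_add_cancel]
  obtain ⟨n, hn⟩ := Infinite.exists_notMem_finset f.support
  ext m
  rw [hconst, ← hconst n]
  simpa using hn

variable {α M : Type*} [AddZeroClass M]

noncomputable def permMulAut : Equiv.Perm α →* MulAut (Multiplicative (α →₀ M)) where
  toFun e := AddEquiv.toMultiplicative
    { equivCongrLeft e with
      map_add' := fun f g => by ext; simp [equivMapDomain_apply] }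
  map_one' := by ext; simp [Equiv.Perm.one_def]
  map_mul' e e' := by ext; simp [equivMapDomain_apply, Equiv.Perm.mul_def]

lemma permMulAut_apply (e : Equiv.Perm α) (f : Multiplicative (α →₀ M)) (a : α) :
    (permMulAut e f).toAdd a = f.toAdd (e.symm a) := by
  simp [permMulAut, equivMapDomain_apply]

lemma permMulAut_single (e : Equiv.Perm α) (a : α) (m : M) :
    permMulAut e (.ofAdd (single a m)) = .ofAdd (single (e a) m) := by
  simp [permMulAut]

end Finsupp

def MulAut.coprodLeft (M N : Type*) [Monoid M] [Monoid N] : MulAut M →* MulAut (Coprod M N) where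
  toFun e := e.coprodCongr (.refl N)
  map_one' := MulEquiv.toMonoidHom_injective <| Coprod.hom_ext rfl rfl
  map_mul' _ _ := MulEquiv.toMonoidHom_injective <| Coprod.hom_ext rfl rfl

@[simp]
lemma MulAut.coprodLeft_apply_inl {M N : Type*} [Monoid M] [Monoid N] (e : MulAut M) (m : M) :
    coprodLeft M N e (Coprod.inl m) = Coprod.inl (e m) :=
  rfl

@[simp]
lemma MulAut.coprodLeft_apply_inr {M N : Type*} [Monoid M] [Monoid N] (e : MulAut M) (n : N) :
    coprodLeft M N e (Coprod.inr n) = Coprod.inr n :=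
  rfl

open Finsupp SemidirectProduct

-- `Finsupp` needs a zero, so the (nonabelian) lamps live in `Additive H`.
abbrev Lamplighter (H : Type*) [Group H] :=
  Multiplicative (ℤ →₀ Additive H) ⋊[permMulAut.comp (MulAction.toPermHom (Multiplicative ℤ) ℤ)]
    Multiplicative ℤ

namespace Lamplighter

variable {H : Type*} [Group H]

noncomputable def lamp : H →* Lamplighter H :=
  inl.comp (AddMonoidHom.toMultiplicativeRight (singleAddHom 0))

lemma left_eq_one_of_commute {x : Lamplighter H} (hx : Commute x (inr (.ofAdd 1))) :
    x.left = 1 := by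
  have hshift : x.left = permMulAut (MulAction.toPerm (Multiplicative.ofAdd (1 : ℤ))) x.left := by
    simpa using congrArg left hx
  refine Multiplicative.toAdd.injective (eq_zero_of_forall_apply_add_one_eq _ fun n => ?_)
  conv_lhs => rw [hshift]
  simp [permMulAut_apply, ← ofAdd_neg]

lemma inr_mul_lamp_mul_inr_inv (n : ℤ) (a : H) :
    inr (.ofAdd n) * lamp a * (inr (.ofAdd n))⁻¹ = inl (.ofAdd (single n (.ofMul a))) := by
  rw [lamp, MonoidHom.comp_apply, ← map_inv, ← inl_aut]
  simp [permMulAut_single]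

lemma mem_center_of_commute_of_conj_lamp_eq {x : Lamplighter H} {h : H}
    (hx : Commute x (inr (.ofAdd 1))) (hconj : ∀ a, x * lamp a * x⁻¹ = lamp (h * a * h⁻¹)) :
    h ∈ Subgroup.center H := by
  have hx' : x = inr (.ofAdd x.right.toAdd) := by
    simpa [left_eq_one_of_commute hx] using (inl_left_mul_inr_right x).symm
  refine Subgroup.mem_center_iff.2 fun a => ?_
  have hsingle := hconj a
  rw [hx', inr_mul_lamp_mul_inr_inv, lamp, MonoidHom.comp_apply, inl_inj] at hsingle
  simp only [AddMonoidHom.toMultiplicativeRight_apply_apply, singleAddHom_apply,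
    EmbeddingLike.apply_eq_iff_eq, single_eq_single_iff] at hsingle
  have hfix : h * a * h⁻¹ = a := by
    rcases hsingle with ⟨-, hfix⟩ | ⟨ha, hha⟩
    · exact hfix.symm
    · rw [ofMul_eq_zero] at ha hha
      rw [hha, ha]
  exact (mul_inv_eq_iff_eq_mul.1 hfix).symm

end Lamplighter

theorem Monoid.Coprod.mem_center_of_conj_eq_coprodLeft {H : Type*} [Group H]
    {g : Coprod H (Multiplicative ℤ)} {h : H}
    (hg : MulAut.conj g = MulAut.coprodLeft H _ (MulAut.conj h)) : h ∈ Subgroup.center H := by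
  have hconj (x) : g * x * g⁻¹ = MulAut.coprodLeft H _ (MulAut.conj h) x := by
    rw [← hg, MulAut.conj_apply]
  let φ : Coprod H (Multiplicative ℤ) →* Lamplighter H :=
    lift Lamplighter.lamp SemidirectProduct.inr
  refine Lamplighter.mem_center_of_commute_of_conj_lamp_eq (x := φ g) ?_ fun a => ?_
  · have hcomm : Commute g (inr (.ofAdd 1)) :=
      mul_inv_eq_iff_eq_mul.1 (hconj (inr (.ofAdd 1)))
    simpa [φ] using hcomm.map φ
  · simpa [φ] using congrArg φ (hconj (inl a))

theorem centerless_embeds_in_out_of_free_product_with_Z_general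
    (H : Type*) [Group H]
    (hcenter : Subgroup.center H = ⊥) :
    ∃ f : H →* MulAut (Coprod H (Multiplicative ℤ)),
      (∀ h a : H, f h (Coprod.inl a) = Coprod.inl (h * a * h⁻¹)) ∧
      (∀ (h : H) (b : Multiplicative ℤ), f h (Coprod.inr b) = Coprod.inr b) ∧
      (∀ h : H,
        f h ∈ (MulAut.conj : Coprod H (Multiplicative ℤ) →*
          MulAut (Coprod H (Multiplicative ℤ))).range → h = 1) := by
  refine ⟨(MulAut.coprodLeft H _).comp MulAut.conj, fun _ => MulAut.coprodLeft_apply_inl _,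
    fun _ => MulAut.coprodLeft_apply_inr _, ?_⟩
  rintro h ⟨g, hg⟩
  simpa [hcenter] using Coprod.mem_center_of_conj_eq_coprodLeft hg

theorem centerless_embeds_in_out_of_free_product_with_Z
    (H : Type*) [Group H] [Group.FG H]
    (hcenter : Subgroup.center H = ⊥) :
    ∃ f : H →* MulAut (Coprod H (Multiplicative ℤ)),
      (∀ h a : H, f h (Coprod.inl a) = Coprod.inl (h * a * h⁻¹)) ∧
      (∀ (h : H) (b : Multiplicative ℤ), f h (Coprod.inr b) = Coprod.inr b) ∧
      (∀ h : H,
        f h ∈ (MulAut.conj : Coprod H (Multiplicative ℤ) →*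
          MulAut (Coprod H (Multiplicative ℤ))).range → h = 1) :=
  centerless_embeds_in_out_of_free_product_with_Z_general H hcenter
end
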